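/- For 0 < α < 1 and y ∈ (1-α², 1), the function a₁(α,y) = α·log(α√y + √(y-1+α²)) - log(√y + √(y-1+α²)) - (α/2)·log(1-y) + ((1-α)/2)·log(1-α²) is strictly increasing in y and positive on (1-α², 1), tending to +∞ as y → 1⁻. -/

import Mathlib

/-!
Write `s = √y` and `t = √(y - 1 + α²)`, so that `s² - t² = 1 - α²`. With this relation the
derivative of `a₁(α, ·)` collapses to `t / (2 s (1 - y))`, which is positive on the interval.
Since `a₁` is continuous up to the left endpoint `y = 1 - α²`, where `t = 0` and `a₁` vanishes,
it is positive on the whole interval. As `y → 1⁻` every term stays bounded except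
`-(α/2) log(1 - y)`, which tends to `+∞`.
-/

open Filter Set

/-- a₁(α,y) = α log(α√y + √(y-1+α²)) - log(√y + √(y-1+α²)) - (α/2) log(1-y)
    + ((1-α)/2) log(1-α²). -/
noncomputable def a1 (α y : ℝ) : ℝ :=
  α * Real.log (α * Real.sqrt y + Real.sqrt (y - 1 + α ^ 2)) -
    Real.log (Real.sqrt y + Real.sqrt (y - 1 + α ^ 2)) -
    (α / 2) * Real.log (1 - y) + ((1 - α) / 2) * Real.log (1 - α ^ 2)

open Real Topology

section
variable {α : ℝ}

lemma a1_hasDerivAt {y : ℝ} (hα0 : 0 < α) (hα1 : α < 1) (hy : y ∈ Ioo (1 - α ^ 2) 1) :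
    HasDerivAt (a1 α) (√(y - 1 + α ^ 2) / (2 * √y * (1 - y))) y := by
  obtain ⟨hy_left, hy_right⟩ := hy
  have hy0 : 0 < y := by nlinarith
  have ht0 : 0 < y - 1 + α ^ 2 := by linarith
  set s := √y with hs
  set t := √(y - 1 + α ^ 2) with ht
  have hs_pos : 0 < s := sqrt_pos.mpr hy0
  have ht_pos : 0 < t := sqrt_pos.mpr ht0
  have hs_sq : s ^ 2 = y := sq_sqrt hy0.le
  have ht_sq : t ^ 2 = y - 1 + α ^ 2 := sq_sqrt ht0.le
  have hs' : HasDerivAt (√·) (1 / (2 * s)) y := hasDerivAt_sqrt hy0.ne'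
  have ht' : HasDerivAt (fun z => √(z - 1 + α ^ 2)) (1 / (2 * t)) y := by
    simpa using (((hasDerivAt_id y).sub_const 1).add_const (α ^ 2)).sqrt ht0.ne'
  have h1y : HasDerivAt (fun z : ℝ => 1 - z) (-1) y := by
    simpa using (hasDerivAt_id y).const_sub 1
  have hu : 0 < α * s + t := by positivity
  have hv : 0 < s + t := by positivity
  have hw : 1 - y ≠ 0 := by linarith
  have H := ((((hs'.const_mul α).add ht').log hu.ne').const_mul α |>.sub
    ((hs'.add ht').log hv.ne')).sub ((h1y.log hw).const_mul (α / 2))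
    |>.add_const (((1 - α) / 2) * Real.log (1 - α ^ 2))
  refine H.congr_deriv ?_
  simp only [Pi.add_apply, ← hs, ← ht]
  field_simp
  linear_combination (s + t) * t * (α ^ 2 * hs_sq - ht_sq)

lemma a1_continuousOn (hα0 : 0 < α) (hα1 : α < 1) :
    ContinuousOn (a1 α) (Ico (1 - α ^ 2) 1) := by
  have hsqrt_pos : ∀ y ∈ Ico (1 - α ^ 2) 1, 0 < √y := fun y hy =>
    sqrt_pos.mpr (by nlinarith [hy.1])
  unfold a1
  refine ContinuousOn.add (ContinuousOn.sub (ContinuousOn.sub ?_ ?_) ?_) continuousOn_const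
  · refine continuousOn_const.mul (ContinuousOn.log (by fun_prop) fun y hy => ?_)
    have := hsqrt_pos y hy
    positivity
  · refine ContinuousOn.log (by fun_prop) fun y hy => ?_
    have := hsqrt_pos y hy
    positivity
  · exact continuousOn_const.mul (ContinuousOn.log (by fun_prop) fun y hy => by linarith [hy.2])

lemma a1_left_endpoint (hα0 : 0 < α) (hα1 : α < 1) : a1 α (1 - α ^ 2) = 0 := by
  have hβ : 0 < 1 - α ^ 2 := by nlinarith
  simp only [a1, sub_sub_cancel, sub_sub_cancel_left, neg_add_cancel, sqrt_zero, add_zero]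
  rw [log_mul hα0.ne' (sqrt_pos.mpr hβ).ne', log_sqrt hβ.le, log_pow]
  ring

lemma a1_strictMonoOn (hα0 : 0 < α) (hα1 : α < 1) :
    StrictMonoOn (a1 α) (Ico (1 - α ^ 2) 1) := by
  refine strictMonoOn_of_deriv_pos (convex_Ico _ _) (a1_continuousOn hα0 hα1) fun y hy => ?_
  rw [interior_Ico] at hy
  rw [(a1_hasDerivAt hα0 hα1 hy).deriv]
  have hy0 : 0 < y := by nlinarith [hy.1]
  exact div_pos (sqrt_pos.mpr (by linarith [hy.1]))
    (mul_pos (mul_pos two_pos (sqrt_pos.mpr hy0)) (by linarith [hy.2]))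

lemma a1_tendsto_atTop (hα0 : 0 < α) : Tendsto (a1 α) (𝓝[<] 1) atTop := by
  have hlog : Tendsto (fun y => log (1 - y)) (𝓝[<] 1) atBot := by
    refine tendsto_log_nhdsGT_zero.comp ?_
    have := (continuous_sub_left (1 : ℝ)).continuousWithinAt.tendsto_nhdsWithin
      (s := Iio 1) (x := 1) (t := Ioi 0) fun y hy => sub_pos.mpr hy
    simpa using this
  have hcont : ContinuousAt (fun y => α * log (α * √y + √(y - 1 + α ^ 2)) -
      log (√y + √(y - 1 + α ^ 2)) + ((1 - α) / 2) * log (1 - α ^ 2)) 1 := by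
    have hroot : √(1 - 1 + α ^ 2) = α := by rw [sub_self, zero_add, sqrt_sq hα0.le]
    refine ContinuousAt.add (ContinuousAt.sub ?_ ?_) continuousAt_const
    · exact continuousAt_const.mul
        (ContinuousAt.log (by fun_prop) (by rw [sqrt_one, hroot]; positivity))
    · exact ContinuousAt.log (by fun_prop) (by rw [sqrt_one, hroot]; positivity)
  refine ((hcont.tendsto.mono_left nhdsWithin_le_nhds).add_atTop
    (hlog.const_mul_atBot_of_neg (by linarith : -(α / 2) < 0))).congr fun y => ?_
  simp only [a1]
  ring

end

theorem a1_strictMono_pos (α : ℝ) (hα0 : 0 < α) (hα1 : α < 1) :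
    StrictMonoOn (a1 α) (Ioo (1 - α ^ 2) 1) ∧
    (∀ y ∈ Ioo (1 - α ^ 2) (1 : ℝ), 0 < a1 α y) ∧
    Tendsto (a1 α) (nhdsWithin 1 (Iio 1)) atTop := by
  have hmono := a1_strictMonoOn hα0 hα1
  refine ⟨hmono.mono Ioo_subset_Ico_self, fun y hy => ?_, a1_tendsto_atTop hα0⟩
  have hlt : 1 - α ^ 2 < 1 := by nlinarith
  simpa [a1_left_endpoint hα0 hα1] using
    hmono (left_mem_Ico.mpr hlt) (Ioo_subset_Ico_self hy) hy.1
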